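/- arXiv:2003.08830 — 3 statements merged into one kernel-verified Lean document; each statement's English description precedes it below -/
import Mathlib

section
/- For every ω ≥ 0, φ″(ω) = 0 if and only if Γ_p(ω)² · Σ_{k=1}^m Φ_z^k(ω) · (Γ_z^k(ω))² − Γ_z(ω)² · Σ_{i=1}^n Φ_p^i(ω) · (Γ_p^i(ω))² = 0, where Φ_z^k(ω) = (2ω_{zk} − 3ω)·σ̃_{zk}² + (2ω_{zk} − ω)·Δω_{zk}(ω)² − 2σ₀·σ̃_{zk}·Δω_{zk}(ω) and Φ_p^i(ω) = (2ω_{pi} − 3ω)·σ̃_{pi}² + (2ω_{pi} − ω)·Δω_{pi}(ω)² − 2σ₀·σ̃_{pi}·Δω_{pi}(ω); that is, the nonnegative zeros of φ″ are exactly the nonnegative real roots of this polynomial in ω. -/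
/-! Each zero or pole `σ + i c` of `G`, with `d = σ₀ - σ`, contributes to `φ` the single term
`arctan ((ω - c) / d) - ω · log (d² + (ω - c)²) / (2σ₀)`, while the gain `k_G` only contributes
a term linear in `ω`. Differentiating twice, each term contributes `Φ / (σ₀ γ²)`, so
`σ₀ φ'' = Σ Φ_z / γ_z² - Σ Φ_p / γ_p²`; multiplying by the nonvanishing `Γ_z² Γ_p²` gives the
polynomial. -/

open Complex Real Filter Finset Set

theorem prod_mul_sum_div {ι K : Type*} [Field K] [DecidableEq ι] (s : Finset ι) (a g : ι → K)
    (hg : ∀ k ∈ s, g k ≠ 0) :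
    (∏ j ∈ s, g j) * ∑ k ∈ s, a k / g k = ∑ k ∈ s, a k * ∏ j ∈ s.erase k, g j := by
  rw [Finset.mul_sum]
  refine Finset.sum_congr rfl fun k hk => ?_
  rw [← Finset.mul_prod_erase s g hk]
  field_simp [hg k hk]

theorem sum_div_sub_sum_div_eq_zero_iff {ι κ K : Type*} [Field K] [Fintype ι] [Fintype κ]
    [DecidableEq ι] [DecidableEq κ] (a g : ι → K) (b h : κ → K)
    (hg : ∀ k, g k ≠ 0) (hh : ∀ i, h i ≠ 0) :
    ∑ k, a k / g k - ∑ i, b i / h i = 0 ↔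
      (∏ i, h i) * ∑ k, a k * ∏ j ∈ univ.erase k, g j
        - (∏ k, g k) * ∑ i, b i * ∏ j ∈ univ.erase i, h j = 0 := by
  have hG : ∏ k, g k ≠ 0 := Finset.prod_ne_zero_iff.mpr fun k _ => hg k
  have hH : ∏ i, h i ≠ 0 := Finset.prod_ne_zero_iff.mpr fun i _ => hh i
  rw [← prod_mul_sum_div _ _ _ fun k _ => hg k, ← prod_mul_sum_div _ _ _ fun i _ => hh i,
    ← mul_right_inj' (mul_ne_zero hG hH), mul_zero]
  constructor <;> intro H <;> linear_combination H

theorem log_norm_sub_eq (σ₀ ω σ c : ℝ) :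
    Real.log ‖((σ₀ : ℂ) + ω * I) - (σ + c * I)‖ = Real.log ((σ₀ - σ) ^ 2 + (ω - c) ^ 2) / 2 := by
  rw [show ((σ₀ : ℂ) + ω * I) - (σ + c * I) = ((σ₀ - σ : ℝ) : ℂ) + ((ω - c : ℝ) : ℂ) * I by
    push_cast; ring, norm_add_mul_I, Real.log_sqrt (by positivity)]

theorem ofReal_add_mul_I_sub_ne_zero {σ₀ σ : ℝ} (h : σ ≠ σ₀) (ω c : ℝ) :
    ((σ₀ : ℂ) + ω * I) - (σ + c * I) ≠ 0 := by
  intro H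
  apply h
  simpa [sub_eq_zero, eq_comm] using congrArg Complex.re H

theorem log_norm_mul_prod_div_prod {ι κ : Type*} [Fintype ι] [Fintype κ] {k : ℝ} (hk : k ≠ 0)
    (z : ι → ℂ) (p : κ → ℂ) (hz : ∀ j, z j ≠ 0) (hp : ∀ i, p i ≠ 0) :
    Real.log ‖(k : ℂ) * (∏ j, z j) / ∏ i, p i‖
      = Real.log |k| + ∑ j, Real.log ‖z j‖ - ∑ i, Real.log ‖p i‖ := by
  have hz' : ∀ j ∈ Finset.univ, ‖z j‖ ≠ 0 := fun j _ => norm_ne_zero_iff.mpr (hz j)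
  have hp' : ∀ i ∈ Finset.univ, ‖p i‖ ≠ 0 := fun i _ => norm_ne_zero_iff.mpr (hp i)
  have hk' : |k| ≠ 0 := abs_ne_zero.mpr hk
  rw [norm_div, norm_mul, norm_real, Real.norm_eq_abs, norm_prod, norm_prod,
    Real.log_div (mul_ne_zero hk' (prod_ne_zero_iff.mpr hz')) (prod_ne_zero_iff.mpr hp'),
    Real.log_mul hk' (prod_ne_zero_iff.mpr hz'), Real.log_prod hz', Real.log_prod hp']

noncomputable def factorPhase (c d σ₀ ω : ℝ) : ℝ :=
  Real.arctan ((ω - c) / d) - ω * (Real.log (d ^ 2 + (ω - c) ^ 2) / (2 * σ₀))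

noncomputable def factorPhaseDeriv (c d σ₀ ω : ℝ) : ℝ :=
  d / (d ^ 2 + (ω - c) ^ 2) - Real.log (d ^ 2 + (ω - c) ^ 2) / (2 * σ₀)
    - ω * (ω - c) / (σ₀ * (d ^ 2 + (ω - c) ^ 2))

def factorPhaseNumerator (c d σ₀ ω : ℝ) : ℝ :=
  (2 * c - 3 * ω) * d ^ 2 + (2 * c - ω) * (ω - c) ^ 2 - 2 * σ₀ * d * (ω - c)

theorem hasDerivAt_sq_add_sq_sub (c d ω : ℝ) :
    HasDerivAt (fun x => d ^ 2 + (x - c) ^ 2) (2 * (ω - c)) ω := by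
  simpa using (((hasDerivAt_id ω).sub_const c).pow 2).const_add (d ^ 2)

theorem hasDerivAt_factorPhase {d : ℝ} (hd : d ≠ 0) (c σ₀ ω : ℝ) :
    HasDerivAt (factorPhase c d σ₀) (factorPhaseDeriv c d σ₀ ω) ω := by
  have hγ : d ^ 2 + (ω - c) ^ 2 ≠ 0 := by positivity
  have harg := (((hasDerivAt_id' ω).sub_const c).div_const d).arctan
  have hlog := ((hasDerivAt_sq_add_sq_sub c d ω).log hγ).div_const (2 * σ₀)
  unfold factorPhase
  refine (harg.fun_sub ((hasDerivAt_id' ω).fun_mul hlog)).congr_deriv ?_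
  unfold factorPhaseDeriv
  field_simp
  ring

theorem hasDerivAt_factorPhaseDeriv {d σ₀ : ℝ} (hd : d ≠ 0) (hσ₀ : σ₀ ≠ 0) (c ω : ℝ) :
    HasDerivAt (factorPhaseDeriv c d σ₀)
      (factorPhaseNumerator c d σ₀ ω / (d ^ 2 + (ω - c) ^ 2) ^ 2 / σ₀) ω := by
  have hγ : d ^ 2 + (ω - c) ^ 2 ≠ 0 := by positivity
  have hq := hasDerivAt_sq_add_sq_sub c d ω
  have h1 := (hasDerivAt_const ω d).fun_div hq hγ
  have h2 := (hq.log hγ).div_const (2 * σ₀)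
  have h3 := ((hasDerivAt_id' ω).fun_mul ((hasDerivAt_id' ω).sub_const c)).fun_div
    (hq.const_mul σ₀) (mul_ne_zero hσ₀ hγ)
  unfold factorPhaseDeriv
  refine ((h1.fun_sub h2).fun_sub h3).congr_deriv ?_
  unfold factorPhaseNumerator
  field_simp
  ring

theorem stmt_7
    (m n : ℕ) (kG : ℝ) (hkG : kG ≠ 0)
    (σz ωz : Fin m → ℝ) (σp ωp : Fin n → ℝ)
    (σ0 : ℝ) (hσ0 : σ0 < 0)
    (hz : ∀ k, σz k ≠ σ0) (hp : ∀ i, σp i ≠ σ0)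
    (G : ℂ → ℂ)
    (hG : ∀ s : ℂ, G s =
      (kG : ℂ) * (∏ k : Fin m, (s - ((σz k : ℂ) + (ωz k : ℂ) * Complex.I))) /
        (∏ i : Fin n, (s - ((σp i : ℂ) + (ωp i : ℂ) * Complex.I))))
    (γz : Fin m → ℝ → ℝ)
    (hγz : ∀ (k : Fin m) (ω : ℝ), γz k ω = (σ0 - σz k) ^ 2 + (ω - ωz k) ^ 2)
    (γp : Fin n → ℝ → ℝ)
    (hγp : ∀ (i : Fin n) (ω : ℝ), γp i ω = (σ0 - σp i) ^ 2 + (ω - ωp i) ^ 2)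
    (H : ℝ → ℝ)
    (hH : ∀ ω : ℝ, H ω = Real.log (‖G ((σ0 : ℂ) + (ω : ℂ) * Complex.I)‖) / σ0)
    (Θ : ℝ → ℝ)
    (hΘ : ∀ ω : ℝ, Θ ω =
      (∑ k : Fin m, Real.arctan ((ω - ωz k) / (σ0 - σz k)))
        - ∑ i : Fin n, Real.arctan ((ω - ωp i) / (σ0 - σp i)))
    (φ : ℝ → ℝ) (hφ : ∀ ω : ℝ, φ ω = Θ ω - ω * H ω)
    : ∀ ω : ℝ, 0 ≤ ω →
      (deriv (deriv φ) ω = 0 ↔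
        (∏ i : Fin n, γp i ω) ^ 2 *
            (∑ k : Fin m,
              ((2 * ωz k - 3 * ω) * (σ0 - σz k) ^ 2 + (2 * ωz k - ω) * (ω - ωz k) ^ 2
                  - 2 * σ0 * (σ0 - σz k) * (ω - ωz k)) *
                (∏ k₁ ∈ Finset.univ.erase k, γz k₁ ω) ^ 2)
          - (∏ k : Fin m, γz k ω) ^ 2 *
            (∑ i : Fin n,
              ((2 * ωp i - 3 * ω) * (σ0 - σp i) ^ 2 + (2 * ωp i - ω) * (ω - ωp i) ^ 2
                  - 2 * σ0 * (σ0 - σp i) * (ω - ωp i)) *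
                (∏ i₁ ∈ Finset.univ.erase i, γp i₁ ω) ^ 2) = 0) := by
  have hdz : ∀ k, σ0 - σz k ≠ 0 := fun k => sub_ne_zero.mpr (hz k).symm
  have hdp : ∀ i, σ0 - σp i ≠ 0 := fun i => sub_ne_zero.mpr (hp i).symm
  have hφ_eq : φ = fun ω => ∑ k, factorPhase (ωz k) (σ0 - σz k) σ0 ω
      - ∑ i, factorPhase (ωp i) (σ0 - σp i) σ0 ω - ω * (Real.log |kG| / σ0) := by
    funext ω
    rw [hφ, hΘ, hH, hG, log_norm_mul_prod_div_prod hkG _ _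
      (fun k => ofReal_add_mul_I_sub_ne_zero (hz k) ω (ωz k))
      (fun i => ofReal_add_mul_I_sub_ne_zero (hp i) ω (ωp i))]
    simp only [log_norm_sub_eq, factorPhase, sum_sub_distrib, ← mul_sum, ← sum_div]
    ring
  have hderiv : deriv φ = fun ω => ∑ k, factorPhaseDeriv (ωz k) (σ0 - σz k) σ0 ω
      - ∑ i, factorPhaseDeriv (ωp i) (σ0 - σp i) σ0 ω - Real.log |kG| / σ0 := by
    funext ω
    rw [hφ_eq]
    refine (((HasDerivAt.fun_sum fun k _ => hasDerivAt_factorPhase (hdz k) _ _ ω).fun_sub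
      (HasDerivAt.fun_sum fun i _ => hasDerivAt_factorPhase (hdp i) _ _ ω)).fun_sub
      ((hasDerivAt_id' ω).mul_const _)).deriv.trans ?_
    simp
  intro ω _
  have hderiv2 := ((HasDerivAt.fun_sum (u := univ) fun k _ =>
      hasDerivAt_factorPhaseDeriv (hdz k) hσ0.ne (ωz k) ω).fun_sub
    (HasDerivAt.fun_sum (u := univ) fun i _ =>
      hasDerivAt_factorPhaseDeriv (hdp i) hσ0.ne (ωp i) ω)).fun_sub
    (hasDerivAt_const ω (Real.log |kG| / σ0))
  rw [hderiv, hderiv2.deriv, sub_zero, ← sum_div, ← sum_div, ← sub_div, div_eq_zero_iff,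
    or_iff_left hσ0.ne, sum_div_sub_sum_div_eq_zero_iff _ _ _ _
      (fun k => by have := hdz k; positivity) (fun i => by have := hdp i; positivity)]
  simp only [hγz, hγp, factorPhaseNumerator, Finset.prod_pow]
end

section
/- (Crossing direction theorem.) Let s₀ = σ₀ + iω₀ with ω₀ real and let h₀ be a real number such that 1 + G(s₀)·e^{−h₀·s₀} = 0 and G′(s₀) − h₀·G(s₀) ≠ 0 (s₀ is a simple characteristic root). Then sign( Re( s₀·( G′(s₀)/G(s₀) − h₀ )^{−1} ) ) = sign( σ₀·φ′(ω₀) ). Equivalently, with f(s,h) = 1 + G(s)·e^{−h·s}, the crossing direction sign( Re( −(∂f/∂h)(∂f/∂s)^{−1} ) ) at (s₀,h₀) equals sign(σ₀·φ′(ω₀)). -/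
open Complex Real Filter Finset Set

/-!
On the line `Re s = σ₀` the logarithmic derivative `L = G'/G = Σ (s - z_k)⁻¹ - Σ (s - p_i)⁻¹`
satisfies `Θ' = Re L` (each arctangent is, up to a constant, the argument of `s - z_k`) and
`(ln |G(σ₀ + iω)|)' = Re (i L) = -Im L`. The characteristic equation forces
`|G(s₀)| = exp (h₀ σ₀)`, i.e. `H(ω₀) = h₀`, hence
`σ₀ φ'(ω₀) = σ₀ (Re L - h₀) + ω₀ Im L = Re (s₀ · conj (L - h₀))`,
which has the sign of `Re (s₀ (L - h₀)⁻¹)`. The crossing quotient `-(∂f/∂h)(∂f/∂s)⁻¹` is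
`s₀ (L - h₀)⁻¹` once the common factor `G(s₀) exp (-h₀ s₀)` cancels.
-/

open ComplexConjugate

theorem hasDerivAt_log_norm {f : ℝ → ℂ} {f' : ℂ} {x : ℝ} (hf : HasDerivAt f f' x)
    (hx : f x ≠ 0) : HasDerivAt (fun t => Real.log ‖f t‖) (f' / f x).re x := by
  have hlog : (fun t => Real.log ‖f t‖) = fun t => Real.log (‖f t‖ ^ 2) / 2 := by
    ext t
    rw [Real.log_pow]
    ring
  have hval : (f' / f x).re = 2 * inner ℝ (f x) f' / ‖f x‖ ^ 2 / 2 := by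
    rw [Complex.inner, div_re, ← normSq_eq_norm_sq]
    simp only [mul_re, conj_re, conj_im]
    ring
  rw [hlog, hval]
  exact (hf.norm_sq.log (by positivity)).div_const 2

theorem hasDerivAt_log_norm_comp_line {G : ℂ → ℂ} {σ ω : ℝ}
    (hG : DifferentiableAt ℂ G (σ + ω * I)) (hG0 : G (σ + ω * I) ≠ 0) :
    HasDerivAt (fun x : ℝ => Real.log ‖G (σ + x * I)‖)
      (deriv G (σ + ω * I) / G (σ + ω * I) * I).re ω := by
  have hline : HasDerivAt (fun x : ℝ => (σ : ℂ) + x * I) I ω := by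
    simpa using ((hasDerivAt_id' ω).ofReal_comp.mul_const I).const_add (σ : ℂ)
  rw [div_mul_eq_mul_div]
  exact hasDerivAt_log_norm (hG.hasDerivAt.comp ω hline) hG0

theorem hasDerivAt_arctan_sub_div (a b x : ℝ) :
    HasDerivAt (fun t => Real.arctan ((t - b) / a)) (a / (a ^ 2 + (x - b) ^ 2)) x := by
  rcases eq_or_ne a 0 with rfl | ha
  · -- both sides vanish, as `(t - b) / 0 = 0`
    simpa using hasDerivAt_const x (0 : ℝ)
  · convert (((hasDerivAt_id' x).sub_const b).div_const a).arctan using 1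
    field_simp

theorem hasDerivAt_sum_arctan_line {ι : Type*} (t : Finset ι) (a b : ι → ℝ) (σ ω : ℝ) :
    HasDerivAt (fun x => ∑ k ∈ t, Real.arctan ((x - b k) / (σ - a k)))
      (∑ k ∈ t, ((σ + ω * I : ℂ) - (a k + b k * I))⁻¹).re ω := by
  rw [re_sum]
  refine (HasDerivAt.fun_sum fun k _ => hasDerivAt_arctan_sub_div (σ - a k) (b k) ω).congr_deriv ?_
  simp [inv_re, normSq_apply, sq]

theorem differentiableAt_prod_sub {ι : Type*} (t : Finset ι) (z : ι → ℂ) (s : ℂ) :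
    DifferentiableAt ℂ (fun w => ∏ i ∈ t, (w - z i)) s := by
  fun_prop

theorem logDeriv_prod_sub {ι : Type*} (t : Finset ι) (z : ι → ℂ) {s : ℂ}
    (hs : ∏ i ∈ t, (s - z i) ≠ 0) :
    logDeriv (fun w => ∏ i ∈ t, (w - z i)) s = ∑ i ∈ t, (s - z i)⁻¹ := by
  rw [logDeriv_prod (prod_ne_zero_iff.mp hs) fun i _ => differentiableAt_id.sub_const _]
  refine Finset.sum_congr rfl fun i _ => ?_
  rw [logDeriv_apply, deriv_sub_const, deriv_id'', one_div]

theorem logDeriv_const_mul_prod_sub_div_prod_sub {ι κ : Type*} (t : Finset ι) (u : Finset κ)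
    (c : ℂ) (z : ι → ℂ) (p : κ → ℂ) {s : ℂ}
    (hs : c * (∏ i ∈ t, (s - z i)) / ∏ j ∈ u, (s - p j) ≠ 0) :
    logDeriv (fun w => c * (∏ i ∈ t, (w - z i)) / ∏ j ∈ u, (w - p j)) s =
      ∑ i ∈ t, (s - z i)⁻¹ - ∑ j ∈ u, (s - p j)⁻¹ := by
  -- a pole at `s` would make the quotient `0`, so `hs` excludes poles as well as zeros
  obtain ⟨⟨hc, hZ⟩, hP⟩ := by simpa only [div_ne_zero_iff, mul_ne_zero_iff] using hs
  rw [logDeriv_div s (f := fun w => c * ∏ i ∈ t, (w - z i)) (mul_ne_zero hc hZ) hP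
    ((differentiableAt_prod_sub t z s).const_mul c) (differentiableAt_prod_sub u p s),
    logDeriv_const_mul s c hc, logDeriv_prod_sub t z hZ, logDeriv_prod_sub u p hP]

theorem sign_re_mul_inv (s w : ℂ) : Real.sign (s * w⁻¹).re = Real.sign (s * conj w).re := by
  rcases eq_or_ne w 0 with rfl | hw
  · simp
  rw [Complex.inv_def, ← mul_assoc, re_mul_ofReal]
  have hpos : 0 < (normSq w)⁻¹ := inv_pos.mpr (normSq_pos.mpr hw)
  rcases lt_trichotomy (s * conj w).re 0 with h | h | h
  · rw [Real.sign_of_neg h, Real.sign_of_neg (mul_neg_of_neg_of_pos h hpos)]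
  · simp [h]
  · rw [Real.sign_of_pos h, Real.sign_of_pos (mul_pos h hpos)]

theorem log_norm_eq_of_one_add_mul_exp_eq_zero {g s : ℂ} {h : ℝ}
    (hg : 1 + g * exp (-(h : ℂ) * s) = 0) : Real.log ‖g‖ = h * s.re := by
  have hnorm := congrArg norm (eq_neg_of_add_eq_zero_right hg)
  rw [norm_mul, norm_exp, norm_neg, norm_one] at hnorm
  have hg_norm : ‖g‖ = Real.exp (h * s.re) := by
    rw [← mul_inv_eq_one₀ (Real.exp_ne_zero _), ← Real.exp_neg]
    simpa using hnorm
  rw [hg_norm, Real.log_exp]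

theorem crossing_quotient_eq {G : ℂ → ℂ} {s : ℂ} (h₀ : ℝ) (hG : DifferentiableAt ℂ G s)
    (hGs : G s ≠ 0) :
    -deriv (fun h : ℝ => 1 + G s * exp (-(h : ℂ) * s)) h₀ *
        (deriv (fun w => 1 + G w * exp (-(h₀ : ℂ) * w)) s)⁻¹ =
      s * (deriv G s / G s - h₀)⁻¹ := by
  have hh : HasDerivAt (fun h : ℂ => 1 + G s * exp (-h * s)) (G s * (exp (-h₀ * s) * -s)) h₀ := by
    simpa using ((((hasDerivAt_id (h₀ : ℂ)).neg.mul_const s).cexp).const_mul (G s)).const_add 1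
  have hs : HasDerivAt (fun w => 1 + G w * exp (-(h₀ : ℂ) * w))
      (deriv G s * exp (-h₀ * s) + G s * (exp (-h₀ * s) * -h₀)) s := by
    simpa using (hG.hasDerivAt.mul ((hasDerivAt_id s).const_mul (-(h₀ : ℂ))).cexp).const_add 1
  rw [hh.comp_ofReal.deriv, hs.deriv, div_sub' hGs, inv_div]
  have he := exp_ne_zero (-(h₀ : ℂ) * s)
  field_simp
  ring

theorem stmt_12_general
    (m n : ℕ) (kG : ℝ)
    (σz ωz : Fin m → ℝ) (σp ωp : Fin n → ℝ)
    (σ0 : ℝ) (hσ0 : σ0 < 0)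
    (G : ℂ → ℂ)
    (hG : ∀ s : ℂ, G s =
      (kG : ℂ) * (∏ k : Fin m, (s - ((σz k : ℂ) + (ωz k : ℂ) * Complex.I))) /
        (∏ i : Fin n, (s - ((σp i : ℂ) + (ωp i : ℂ) * Complex.I))))
    (H : ℝ → ℝ)
    (hH : ∀ ω : ℝ, H ω = Real.log ‖G ((σ0 : ℂ) + (ω : ℂ) * Complex.I)‖ / σ0)
    (Θ : ℝ → ℝ)
    (hΘ : ∀ ω : ℝ, Θ ω =
      (∑ k : Fin m, Real.arctan ((ω - ωz k) / (σ0 - σz k)))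
        - ∑ i : Fin n, Real.arctan ((ω - ωp i) / (σ0 - σp i)))
    (φ : ℝ → ℝ) (hφ : ∀ ω : ℝ, φ ω = Θ ω - ω * H ω)
    (ω0 h0 : ℝ) (s0 : ℂ) (hs0 : s0 = (σ0 : ℂ) + (ω0 : ℂ) * Complex.I)
    (hchar : 1 + G s0 * Complex.exp (-(h0 : ℂ) * s0) = 0)
    : Real.sign ((s0 * (deriv G s0 / G s0 - (h0 : ℂ))⁻¹).re) = Real.sign (σ0 * deriv φ ω0) ∧
      Real.sign
          ((-(deriv (fun h : ℝ => 1 + G s0 * Complex.exp (-(h : ℂ) * s0)) h0) *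
              (deriv (fun s : ℂ => 1 + G s * Complex.exp (-(h0 : ℂ) * s)) s0)⁻¹).re) =
        Real.sign (σ0 * deriv φ ω0) := by
  subst hs0
  have hG0 : G (σ0 + ω0 * I) ≠ 0 := fun h => by simp [h] at hchar
  have hGfun := funext hG
  have hrat0 := hG0
  rw [hG] at hrat0
  have hdiff : DifferentiableAt ℂ G (σ0 + ω0 * I) := by
    rw [hGfun]
    exact ((differentiableAt_prod_sub _ _ _).const_mul _).div (differentiableAt_prod_sub _ _ _)
      (div_ne_zero_iff.mp hrat0).2
  set L := deriv G (σ0 + ω0 * I) / G (σ0 + ω0 * I) with hL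
  have hΘ' : HasDerivAt Θ L.re ω0 := by
    rw [funext hΘ, hL, ← logDeriv_apply, hGfun,
      logDeriv_const_mul_prod_sub_div_prod_sub _ _ _ _ _ hrat0, sub_re]
    exact (hasDerivAt_sum_arctan_line _ _ _ _ _).sub (hasDerivAt_sum_arctan_line _ _ _ _ _)
  have hH' : HasDerivAt H ((L * I).re / σ0) ω0 := by
    rw [funext hH]
    exact (hasDerivAt_log_norm_comp_line hdiff hG0).div_const σ0
  have hH0 : H ω0 = h0 := by
    rw [hH, log_norm_eq_of_one_add_mul_exp_eq_zero hchar]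
    simp [hσ0.ne]
  have hφ' : HasDerivAt φ (L.re - (1 * H ω0 + ω0 * ((L * I).re / σ0))) ω0 := by
    rw [funext hφ]
    exact hΘ'.sub ((hasDerivAt_id' ω0).mul hH')
  have hσφ' : σ0 * deriv φ ω0 = ((σ0 + ω0 * I) * conj (L - h0)).re := by
    rw [hφ'.deriv, hH0]
    simp only [mul_re, mul_im, add_re, add_im, sub_re, sub_im, conj_re, conj_im, ofReal_re,
      ofReal_im, I_re, I_im]
    field_simp [hσ0.ne]
    ring
  have key : Real.sign ((σ0 + ω0 * I) * (L - h0)⁻¹).re = Real.sign (σ0 * deriv φ ω0) := by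
    rw [sign_re_mul_inv, hσφ']
  exact ⟨key, by rw [crossing_quotient_eq h0 hdiff hG0]; exact key⟩

theorem stmt_12
    (m n : ℕ) (kG : ℝ) (hkG : kG ≠ 0)
    (σz ωz : Fin m → ℝ) (σp ωp : Fin n → ℝ)
    (σ0 : ℝ) (hσ0 : σ0 < 0)
    (hz : ∀ k, σz k ≠ σ0) (hp : ∀ i, σp i ≠ σ0)
    (G : ℂ → ℂ)
    (hG : ∀ s : ℂ, G s =
      (kG : ℂ) * (∏ k : Fin m, (s - ((σz k : ℂ) + (ωz k : ℂ) * Complex.I))) /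
        (∏ i : Fin n, (s - ((σp i : ℂ) + (ωp i : ℂ) * Complex.I))))
    (γz : Fin m → ℝ → ℝ)
    (hγz : ∀ (k : Fin m) (ω : ℝ), γz k ω = (σ0 - σz k) ^ 2 + (ω - ωz k) ^ 2)
    (γp : Fin n → ℝ → ℝ)
    (hγp : ∀ (i : Fin n) (ω : ℝ), γp i ω = (σ0 - σp i) ^ 2 + (ω - ωp i) ^ 2)
    (H : ℝ → ℝ)
    (hH : ∀ ω : ℝ, H ω = Real.log ‖G ((σ0 : ℂ) + (ω : ℂ) * Complex.I)‖ / σ0)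
    (Θ : ℝ → ℝ)
    (hΘ : ∀ ω : ℝ, Θ ω =
      (∑ k : Fin m, Real.arctan ((ω - ωz k) / (σ0 - σz k)))
        - ∑ i : Fin n, Real.arctan ((ω - ωp i) / (σ0 - σp i)))
    (φ : ℝ → ℝ) (hφ : ∀ ω : ℝ, φ ω = Θ ω - ω * H ω)
    (ω0 h0 : ℝ) (s0 : ℂ) (hs0 : s0 = (σ0 : ℂ) + (ω0 : ℂ) * Complex.I)
    (hchar : 1 + G s0 * Complex.exp (-(h0 : ℂ) * s0) = 0)
    (hsimple : deriv G s0 - (h0 : ℂ) * G s0 ≠ 0)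
    : Real.sign ((s0 * (deriv G s0 / G s0 - (h0 : ℂ))⁻¹).re) = Real.sign (σ0 * deriv φ ω0) ∧
      Real.sign
          ((-(deriv (fun h : ℝ => 1 + G s0 * Complex.exp (-(h : ℂ) * s0)) h0) *
              (deriv (fun s : ℂ => 1 + G s * Complex.exp (-(h0 : ℂ) * s)) s0)⁻¹).re) =
        Real.sign (σ0 * deriv φ ω0) :=
  stmt_12_general m n kG σz ωz σp ωp σ0 hσ0 G hG H hH Θ hΘ φ hφ ω0 h0 s0 hs0 hchar
end

section
/- (Imaginary-axis crossing direction.) Let ω₀ > 0 be such that iω₀ is neither a zero nor a pole of G (z_k ≠ iω₀ for all k and p_i ≠ iω₀ for all i), and let h₀ be a real number with 1 + G(iω₀)·e^{−i·h₀·ω₀} = 0 and G′(iω₀) − h₀·G(iω₀) ≠ 0. Let H_im denote the function ω ↦ ln|G(iω)|, which is differentiable at ω₀. Then the crossing direction satisfies sign( Re( iω₀·( G′(iω₀)/G(iω₀) − h₀ )^{−1} ) ) = sign( −H_im′(ω₀) ). -/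
/-! Since `G(iω₀) ≠ 0` and `G` is holomorphic there, `H_im(ω) = log |G(iω)|` has derivative
`Re (i G'(iω₀) / G(iω₀)) = -Im (G'(iω₀) / G(iω₀))`, which is `-Im w` for
`w = G'(iω₀)/G(iω₀) - h₀` because `h₀` is real. On the other side
`Re (iω₀ w⁻¹) = ω₀ Im w / |w|²`, whose sign is that of `Im w` as `ω₀ > 0`. -/

open Complex Real Filter Finset Set

theorem Real.sign_mul_of_pos {a : ℝ} (ha : 0 < a) (x : ℝ) : Real.sign (a * x) = Real.sign x := by
  rcases lt_trichotomy x 0 with hx | rfl | hx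
  · rw [Real.sign_of_neg hx, Real.sign_of_neg (mul_neg_of_pos_of_neg ha hx)]
  · rw [mul_zero]
  · rw [Real.sign_of_pos hx, Real.sign_of_pos (mul_pos ha hx)]

theorem Complex.re_ofReal_mul_I_mul_inv (ω : ℝ) (w : ℂ) :
    ((ω : ℂ) * I * w⁻¹).re = ω / normSq w * w.im := by
  simp only [mul_re, mul_im, inv_re, inv_im, ofReal_re, ofReal_im, I_re, I_im]
  ring

theorem Complex.sign_re_ofReal_mul_I_mul_inv {ω : ℝ} (hω : 0 < ω) (w : ℂ) :
    Real.sign ((ω : ℂ) * I * w⁻¹).re = Real.sign w.im := by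
  rcases eq_or_ne w 0 with rfl | hw
  · simp
  · rw [re_ofReal_mul_I_mul_inv]
    exact Real.sign_mul_of_pos (div_pos hω (normSq_pos.2 hw)) _

theorem HasDerivAt.log_norm {u : ℝ → ℂ} {u' : ℂ} {x : ℝ} (hu : HasDerivAt u u' x)
    (hx : u x ≠ 0) : HasDerivAt (fun t => Real.log ‖u t‖) (u' / u x).re x := by
  have hsq := (hu.norm_sq.log (by positivity)).div_const 2
  have hlog_sq : ∀ t, Real.log (‖u t‖ ^ 2) / 2 = Real.log ‖u t‖ := fun t => by
    rw [Real.log_pow]; ring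
  simp only [hlog_sq] at hsq
  refine hsq.congr_deriv ?_
  rw [Complex.inner, div_re, ← normSq_eq_norm_sq, mul_re]
  simp only [conj_re, conj_im]
  field_simp
  ring

theorem DifferentiableAt.hasDerivAt_log_norm_comp_mul_I {f : ℂ → ℂ} {ω : ℝ}
    (hf : DifferentiableAt ℂ f (ω * I)) (hω : f (ω * I) ≠ 0) :
    HasDerivAt (fun t : ℝ => Real.log ‖f (t * I)‖) (-(deriv f (ω * I) / f (ω * I)).im) ω := by
  have hline : HasDerivAt (fun t : ℝ => (t : ℂ) * I) I ω := by
    simpa using (hasDerivAt_id ω).ofReal_comp.mul_const I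
  have hcomp : HasDerivAt (fun t : ℝ => f (t * I)) (deriv f (ω * I) * I) ω :=
    hf.hasDerivAt.comp ω hline
  refine (hcomp.log_norm hω).congr_deriv ?_
  rw [mul_div_right_comm, mul_I_re]

theorem differentiableAt_mul_prod_div_prod {ι κ : Type*} (c : ℂ) (z : ι → ℂ) (p : κ → ℂ)
    (A : Finset ι) (B : Finset κ) {s : ℂ} (hs : ∀ i ∈ B, p i ≠ s) :
    DifferentiableAt ℂ (fun s => c * (∏ k ∈ A, (s - z k)) / ∏ i ∈ B, (s - p i)) s := by
  refine DifferentiableAt.div (by fun_prop) (by fun_prop) ?_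
  exact prod_ne_zero_iff.2 fun i hi => sub_ne_zero.2 (hs i hi).symm

theorem stmt_19_general
    (m n : ℕ) (kG : ℝ)
    (z : Fin m → ℂ) (p : Fin n → ℂ)
    (G : ℂ → ℂ)
    (hG : ∀ s : ℂ, G s = (kG : ℂ) * (∏ k : Fin m, (s - z k)) / (∏ i : Fin n, (s - p i)))
    (Him : ℝ → ℝ)
    (hHim : ∀ ω : ℝ, Him ω = Real.log ‖G ((ω : ℂ) * Complex.I)‖)
    (ω0 : ℝ) (hω0 : 0 < ω0)
    (hp : ∀ i, p i ≠ (ω0 : ℂ) * Complex.I)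
    (h0 : ℝ)
    (hchar : 1 + G ((ω0 : ℂ) * Complex.I) *
        Complex.exp (-(Complex.I * (h0 : ℂ) * (ω0 : ℂ))) = 0)
    : DifferentiableAt ℝ Him ω0 ∧
      Real.sign
          (((ω0 : ℂ) * Complex.I *
              (deriv G ((ω0 : ℂ) * Complex.I) / G ((ω0 : ℂ) * Complex.I) - (h0 : ℂ))⁻¹).re) =
        Real.sign (-(deriv Him ω0)) := by
  have hG0 : G (ω0 * I) ≠ 0 := fun h => by simp [h] at hchar
  have hGd : DifferentiableAt ℂ G (ω0 * I) := by
    rw [funext hG]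
    exact differentiableAt_mul_prod_div_prod _ _ _ _ _ fun i _ => hp i
  have hHim' : HasDerivAt Him (-(deriv G (ω0 * I) / G (ω0 * I)).im) ω0 := by
    rw [funext hHim]
    exact hGd.hasDerivAt_log_norm_comp_mul_I hG0
  refine ⟨hHim'.differentiableAt, ?_⟩
  rw [hHim'.deriv, neg_neg, sign_re_ofReal_mul_I_mul_inv hω0, sub_im, ofReal_im, sub_zero]

theorem stmt_19
    (m n : ℕ) (kG : ℝ) (hkG : kG ≠ 0)
    (z : Fin m → ℂ) (p : Fin n → ℂ)
    (G : ℂ → ℂ)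
    (hG : ∀ s : ℂ, G s = (kG : ℂ) * (∏ k : Fin m, (s - z k)) / (∏ i : Fin n, (s - p i)))
    (Him : ℝ → ℝ)
    (hHim : ∀ ω : ℝ, Him ω = Real.log ‖G ((ω : ℂ) * Complex.I)‖)
    (ω0 : ℝ) (hω0 : 0 < ω0)
    (hz : ∀ k, z k ≠ (ω0 : ℂ) * Complex.I) (hp : ∀ i, p i ≠ (ω0 : ℂ) * Complex.I)
    (h0 : ℝ)
    (hchar : 1 + G ((ω0 : ℂ) * Complex.I) *
        Complex.exp (-(Complex.I * (h0 : ℂ) * (ω0 : ℂ))) = 0)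
    (hsimple : deriv G ((ω0 : ℂ) * Complex.I) - (h0 : ℂ) * G ((ω0 : ℂ) * Complex.I) ≠ 0)
    : DifferentiableAt ℝ Him ω0 ∧
      Real.sign
          (((ω0 : ℂ) * Complex.I *
              (deriv G ((ω0 : ℂ) * Complex.I) / G ((ω0 : ℂ) * Complex.I) - (h0 : ℂ))⁻¹).re) =
        Real.sign (-(deriv Him ω0)) :=
  stmt_19_general m n kG z p G hG Him hHim ω0 hω0 hp h0 hchar
end
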